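/- arXiv:2008.04510 — 2 statements merged into one kernel-verified Lean document; each statement's English description precedes it below -/
import Mathlib

section
/- (Lower bound, Two-to-One.) Let X be a countable type (the union of sentences of two source languages), let D₀ and D₁ be probability distributions (PMFs) on X, let Y be a countable type (sentences of the target language), and let f₀*, f₁* : X → Y be the ground-truth translators for the two translation tasks. Let Z be a measurable space and g : X → Z be a map with d_TV(g♯D₀, g♯D₁) ≤ ε. Then for every measurable decoder h : Z → Y, Pr_{X∼D₀}(h(g(X)) ≠ f₀*(X)) + Pr_{X∼D₁}(h(g(X)) ≠ f₁*(X)) ≥ d_TV(f₀*♯D₀, f₁*♯D₁) − ε. -/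
/-! The decoder `h ∘ g` is a translator for both tasks. Coupling each ground truth `fᵢ` with
`h ∘ g` on the same source `Dᵢ` shows that the target marginal `fᵢ♯Dᵢ` is within the error
`Err_{Dᵢ}(h ∘ g)` of `(h ∘ g)♯Dᵢ`, while by data processing the two predicted marginals
`(h ∘ g)♯D₀` and `(h ∘ g)♯D₁` are within `ε` of each other. The triangle inequality for total
variation finishes the proof. -/

open MeasureTheory

/-- Total variation distance between two measures: supremum over measurable events of
the absolute difference of the probabilities. -/
noncomputable def tvDist {α : Type*} [MeasurableSpace α] (P Q : Measure α) : ℝ :=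
  ⨆ E : {s : Set α // MeasurableSet s}, |(P E.1).toReal - (Q E.1).toReal|

section tvDist

variable {α β : Type*} [MeasurableSpace α] [MeasurableSpace β] {P Q R : Measure α}

lemma abs_measureReal_sub_le_tvDist [IsFiniteMeasure P] [IsFiniteMeasure Q]
    {E : Set α} (hE : MeasurableSet E) : |P.real E - Q.real E| ≤ tvDist P Q := by
  refine le_ciSup (f := fun E : {s : Set α // MeasurableSet s} ↦ |P.real E.1 - Q.real E.1|)
    ⟨P.real Set.univ + Q.real Set.univ, ?_⟩ ⟨E, hE⟩
  rintro _ ⟨F, rfl⟩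
  calc |P.real F.1 - Q.real F.1| ≤ |P.real F.1| + |Q.real F.1| := abs_sub _ _
    _ = P.real F.1 + Q.real F.1 := by rw [abs_of_nonneg measureReal_nonneg,
        abs_of_nonneg measureReal_nonneg]
    _ ≤ P.real Set.univ + Q.real Set.univ :=
        add_le_add (measureReal_mono (Set.subset_univ _)) (measureReal_mono (Set.subset_univ _))

lemma tvDist_le_of_forall_measurableSet {c : ℝ}
    (hc : ∀ E, MeasurableSet E → |P.real E - Q.real E| ≤ c) : tvDist P Q ≤ c :=
  have : Nonempty {s : Set α // MeasurableSet s} := ⟨⟨∅, .empty⟩⟩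
  ciSup_le fun E ↦ hc E.1 E.2

lemma tvDist_comm (P Q : Measure α) : tvDist P Q = tvDist Q P := by
  simp only [tvDist, abs_sub_comm]

lemma tvDist_triangle [IsFiniteMeasure P] [IsFiniteMeasure Q] [IsFiniteMeasure R] :
    tvDist P R ≤ tvDist P Q + tvDist Q R :=
  tvDist_le_of_forall_measurableSet fun _ hE ↦ (abs_sub_le _ _ _).trans <|
    add_le_add (abs_measureReal_sub_le_tvDist hE) (abs_measureReal_sub_le_tvDist hE)

lemma tvDist_map_le [IsFiniteMeasure P] [IsFiniteMeasure Q] {f : α → β} (hf : Measurable f) :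
    tvDist (P.map f) (Q.map f) ≤ tvDist P Q :=
  tvDist_le_of_forall_measurableSet fun E hE ↦ by
    rw [map_measureReal_apply hf hE, map_measureReal_apply hf hE]
    exact abs_measureReal_sub_le_tvDist (hf hE)

lemma tvDist_map_le_measureReal_ne (μ : Measure α) [IsFiniteMeasure μ] {f f' : α → β}
    (hf : Measurable f) (hf' : Measurable f') :
    tvDist (μ.map f) (μ.map f') ≤ μ.real {x | f x ≠ f' x} :=
  tvDist_le_of_forall_measurableSet fun E hE ↦ by
    rw [map_measureReal_apply hf hE, map_measureReal_apply hf' hE]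
    refine (abs_measureReal_sub_le_measureReal_symmDiff (hf hE).nullMeasurableSet
      (hf' hE).nullMeasurableSet).trans (measureReal_mono ?_)
    rintro x (⟨hx, hx'⟩ | ⟨hx', hx⟩) heq
    · exact hx' (show f' x ∈ E from heq ▸ hx)
    · exact hx (show f x ∈ E from heq ▸ hx')

end tvDist

theorem two_to_one_lower_bound_general {X Y Z : Type*}
    [MeasurableSpace X] [DiscreteMeasurableSpace X]
    [MeasurableSpace Y]
    [MeasurableSpace Z]
    (D₀ D₁ : PMF X) (f₀ f₁ : X → Y) (g : X → Z) (ε : ℝ)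
    (hg : tvDist (D₀.map g).toMeasure (D₁.map g).toMeasure ≤ ε)
    {h : Z → Y} (hh : Measurable h) :
    (D₀.toMeasure {x | h (g x) ≠ f₀ x}).toReal
      + (D₁.toMeasure {x | h (g x) ≠ f₁ x}).toReal
      ≥ tvDist (D₀.map f₀).toMeasure (D₁.map f₁).toMeasure - ε := by
  have hhg : Measurable (h ∘ g) := hh.comp .of_discrete
  rw [← D₀.toMeasure_map (f := g) .of_discrete, ← D₁.toMeasure_map (f := g) .of_discrete] at hg
  rw [← D₀.toMeasure_map (f := f₀) .of_discrete, ← D₁.toMeasure_map (f := f₁) .of_discrete]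
  set μ₀ := D₀.toMeasure
  set μ₁ := D₁.toMeasure
  have h_shared : tvDist (μ₀.map (h ∘ g)) (μ₁.map (h ∘ g)) ≤ ε := by
    rw [← Measure.map_map hh .of_discrete, ← Measure.map_map hh .of_discrete]
    exact (tvDist_map_le hh).trans hg
  have h_err₀ : tvDist (μ₀.map f₀) (μ₀.map (h ∘ g)) ≤ μ₀.real {x | h (g x) ≠ f₀ x} :=
    tvDist_comm (μ₀.map f₀) _ ▸ tvDist_map_le_measureReal_ne μ₀ hhg .of_discrete
  have h_err₁ : tvDist (μ₁.map (h ∘ g)) (μ₁.map f₁) ≤ μ₁.real {x | h (g x) ≠ f₁ x} :=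
    tvDist_map_le_measureReal_ne μ₁ hhg .of_discrete
  suffices tvDist (μ₀.map f₀) (μ₁.map f₁)
      ≤ μ₀.real {x | h (g x) ≠ f₀ x} + (ε + μ₁.real {x | h (g x) ≠ f₁ x}) by
    simp only [Measure.real] at this
    linarith
  calc tvDist (μ₀.map f₀) (μ₁.map f₁)
      ≤ tvDist (μ₀.map f₀) (μ₀.map (h ∘ g)) + tvDist (μ₀.map (h ∘ g)) (μ₁.map f₁) :=
        tvDist_triangle
    _ ≤ tvDist (μ₀.map f₀) (μ₀.map (h ∘ g))
        + (tvDist (μ₀.map (h ∘ g)) (μ₁.map (h ∘ g)) + tvDist (μ₁.map (h ∘ g)) (μ₁.map f₁)) :=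
        add_le_add_right tvDist_triangle _
    _ ≤ _ := add_le_add h_err₀ (add_le_add h_shared h_err₁)

/-- Lower bound, Two-to-One: if `g` is an `ε`-universal language mapping for the two
source distributions `D₀, D₁`, then for any measurable decoder `h` the sum of the
translation errors on the two tasks is at least the total variation distance between
the target marginals minus `ε`. -/
theorem two_to_one_lower_bound {X Y Z : Type*}
    [Countable X] [MeasurableSpace X] [DiscreteMeasurableSpace X]
    [Countable Y] [MeasurableSpace Y] [DiscreteMeasurableSpace Y]
    [MeasurableSpace Z]
    (D₀ D₁ : PMF X) (f₀ f₁ : X → Y) (g : X → Z) (ε : ℝ)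
    (hg : tvDist (D₀.map g).toMeasure (D₁.map g).toMeasure ≤ ε)
    {h : Z → Y} (hh : Measurable h) :
    (D₀.toMeasure {x | h (g x) ≠ f₀ x}).toReal
      + (D₁.toMeasure {x | h (g x) ≠ f₁ x}).toReal
      ≥ tvDist (D₀.map f₀).toMeasure (D₁.map f₁).toMeasure - ε :=
  two_to_one_lower_bound_general D₀ D₁ f₀ f₁ g ε hg hh
end

section
/- (Generalization bound for a single translation task.) Let E be a real normed vector space, let μ be a probability measure on E × E with ‖x'‖ ≤ M for μ-almost every (x, x'), and let F be a set of Borel measurable maps f : E → E with sup_x ‖f(x)‖ ≤ M for every f ∈ F. Fix ε > 0 and 0 < δ < 1, and suppose there is a finite (ε/(16M))-net T ⊆ F of F in sup norm with |T| = k. If n ≥ (32·M⁴/ε²)·log(2k/δ), then with μⁿ-outer probability at least 1 − δ over i.i.d. samples S ∼ μⁿ of size n, every f ∈ F satisfies ε(f) ≤ ε̂_S(f) + ε. -/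
/-!
For a single map `g` with measurable loss, Hoeffding's inequality bounds the probability that
`ε(g) - ε̂_S(g)` exceeds `s` by `exp(-2ns²/(2M)⁴)`; a union bound over the `k` net points gives the
uniform statement. Maps within sup distance `ε/(8M)` of each other have squared losses within
`ε/2` of each other, since all values and targets are bounded by `M`. The losses of members of
`F` need not be measurable, so each net cell is represented by a member whose loss is integrable
(the only ones that can be bad) and whose population loss is nearly the largest in the cell;
this costs an arbitrarily small slack, which the factor `2` inside the logarithm absorbs, so that
`s` can be taken just below `ε/2`.
-/

open MeasureTheory

/-- The population translation loss of a map `f : E → E` under a distribution `μ` over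
aligned pairs: `ε(f) = ∫ ‖f(x) - x'‖² dμ(x, x')`. -/
noncomputable def popLoss {E : Type*} [NormedAddCommGroup E] [MeasurableSpace E]
    (μ : Measure (E × E)) (f : E → E) : ℝ :=
  ∫ p, ‖f p.1 - p.2‖ ^ 2 ∂μ

/-- The empirical translation loss of a map `f : E → E` on a finite sample `S` of
aligned pairs: `ε̂_S(f) = (1/n) · Σᵢ ‖f(xᵢ) - x'ᵢ‖²`. -/
noncomputable def empLoss {E : Type*} [NormedAddCommGroup E] {n : ℕ}
    (S : Fin n → E × E) (f : E → E) : ℝ :=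
  (1 / (n : ℝ)) * ∑ i : Fin n, ‖f (S i).1 - (S i).2‖ ^ 2

open ProbabilityTheory

theorem measure_pi_le_integral_sub_sampleMean_le {Ω : Type*} [MeasurableSpace Ω]
    {ν : Measure Ω} [IsProbabilityMeasure ν] {g : Ω → ℝ} (hg : AEMeasurable g ν) {a b : ℝ}
    (hgab : ∀ᵐ x ∂ν, g x ∈ Set.Icc a b) (n : ℕ) {s : ℝ} (hs : 0 ≤ s) :
    Measure.pi (fun _ : Fin n => ν) {S | s ≤ ∫ x, g x ∂ν - 1 / n * ∑ i, g (S i)}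
      ≤ ENNReal.ofReal (Real.exp (-2 * n * s ^ 2 / (b - a) ^ 2)) := by
  set Y : Ω → ℝ := fun x => ∫ y, g y ∂ν - g x
  have hY : HasSubgaussianMGF Y ((‖b - a‖₊ / 2) ^ 2) ν :=
    (hasSubgaussianMGF_of_mem_Icc hg hgab).neg.congr (ae_of_all _ fun x => by simp [Y])
  have hYi (i : Fin n) : HasSubgaussianMGF (fun S : Fin n → Ω => Y (S i)) ((‖b - a‖₊ / 2) ^ 2)
      (Measure.pi fun _ => ν) :=
    HasSubgaussianMGF.of_map (X := Y) (Y := Function.eval i) (measurable_pi_apply i).aemeasurable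
      (by rwa [(measurePreserving_eval (fun _ : Fin n => ν) i).map_eq])
  have hsum := HasSubgaussianMGF.measure_sum_ge_le_of_iIndepFun
    (iIndepFun_pi (μ := fun _ : Fin n => ν) fun _ => hY.aemeasurable) (s := Finset.univ)
    (fun i _ => hYi i) (ε := n * s) (by positivity)
  have hsub : {S : Fin n → Ω | s ≤ ∫ x, g x ∂ν - 1 / n * ∑ i, g (S i)}
      ⊆ {S | n * s ≤ ∑ i, Y (S i)} := by
    intro S hS
    simp only [Set.mem_ofPred_eq, Y, Finset.sum_sub_distrib, Finset.sum_const, Finset.card_univ,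
      Fintype.card_fin, nsmul_eq_mul] at hS ⊢
    rcases Nat.eq_zero_or_pos n with rfl | hn
    · simp
    · calc (n : ℝ) * s ≤ n * (∫ x, g x ∂ν - 1 / n * ∑ i, g (S i)) := by gcongr
        _ = _ := by field_simp
  calc _ ≤ Measure.pi (fun _ : Fin n => ν) {S | n * s ≤ ∑ i, Y (S i)} := measure_mono hsub
    _ = ENNReal.ofReal ((Measure.pi fun _ : Fin n => ν).real {S | n * s ≤ ∑ i, Y (S i)}) :=
      (ofReal_measureReal (measure_ne_top _ _)).symm
    _ ≤ _ := by
      gcongr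
      convert hsum using 2
      simp only [Finset.sum_const, Finset.card_univ, Fintype.card_fin, nsmul_eq_mul]
      push_cast
      rw [Real.norm_eq_abs, div_pow, sq_abs]
      rcases eq_or_ne (n : ℝ) 0 with hn | hn
      · simp [hn]
      rcases eq_or_ne (b - a) 0 with hab | hab
      · simp [hab]
      field_simp

theorem exists_mem_Ioo_exp_lt {a B b η : ℝ} (hb : 0 < b) (h : Real.exp (-2 * a * b ^ 2 / B) < η) :
    ∃ s ∈ Set.Ioo 0 b, Real.exp (-2 * a * s ^ 2 / B) < η := by
  have hcont : ContinuousAt (fun s : ℝ => Real.exp (-2 * a * s ^ 2 / B)) b := by fun_prop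
  have hlt : ∀ᶠ s in nhdsWithin b (Set.Iio b), Real.exp (-2 * a * s ^ 2 / B) < η :=
    (hcont.eventually (gt_mem_nhds h)).filter_mono nhdsWithin_le_nhds
  exact (hlt.and (Ioo_mem_nhdsLT hb)).exists.imp fun s hs => ⟨hs.2, hs.1⟩

theorem exp_neg_lt_div_of_log_le {M ε δ : ℝ} {k n : ℕ} (hM : 0 < M) (hε : 0 < ε) (hδ : 0 < δ)
    (hk : 0 < k) (hn : 32 * M ^ 4 / ε ^ 2 * Real.log (2 * k / δ) ≤ n) :
    Real.exp (-2 * n * (ε / 2) ^ 2 / ((2 * M) ^ 2) ^ 2) < δ / k := by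
  have hkδ : 0 < (k : ℝ) / δ := by positivity
  have hlog : Real.log (2 * k / δ) = Real.log 2 + Real.log (k / δ) := by
    rw [mul_div_assoc, Real.log_mul two_ne_zero hkδ.ne']
  have hexponent : -2 * n * (ε / 2) ^ 2 / ((2 * M) ^ 2) ^ 2 = -(n * ε ^ 2 / (32 * M ^ 4)) := by
    field_simp
    ring
  have hn' : Real.log (2 * k / δ) ≤ n * ε ^ 2 / (32 * M ^ 4) := by
    rw [le_div_iff₀ (by positivity)]
    rw [div_mul_eq_mul_div, div_le_iff₀ (by positivity)] at hn
    linarith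
  rw [hexponent, ← Real.lt_log_iff_exp_lt (by positivity)]
  rw [show δ / k = (k / δ)⁻¹ by rw [inv_div], Real.log_inv]
  linarith [Real.log_pos one_lt_two]

theorem exists_mem_forall_le_add {α : Type*} {A : Set α} {φ : α → ℝ} (hA : A.Nonempty)
    (hφ : BddAbove (φ '' A)) {γ : ℝ} (hγ : 0 < γ) : ∃ a ∈ A, ∀ b ∈ A, φ b ≤ φ a + γ := by
  obtain ⟨_, ⟨a, ha, rfl⟩, hlt⟩ :=
    exists_lt_of_lt_csSup (hA.image φ) (sub_lt_self (sSup (φ '' A)) hγ)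
  exact ⟨a, ha, fun b hb => by linarith [le_csSup hφ (Set.mem_image_of_mem φ hb)]⟩

section TranslationLoss

variable {E : Type*} [NormedAddCommGroup E] {M : ℝ}

theorem sq_norm_sub_le_of_norm_le {u v : E} (hu : ‖u‖ ≤ M) (hv : ‖v‖ ≤ M) :
    ‖u - v‖ ^ 2 ≤ (2 * M) ^ 2 :=
  pow_le_pow_left₀ (norm_nonneg _) ((norm_sub_le u v).trans (by linarith)) 2

theorem sq_norm_sub_le_sq_norm_sub_add {u v w : E} (hu : ‖u‖ ≤ M) (hv : ‖v‖ ≤ M)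
    (hw : ‖w‖ ≤ M) : ‖w - v‖ ^ 2 ≤ ‖u - v‖ ^ 2 + 4 * M * ‖u - w‖ := by
  have hdiff : ‖w - v‖ - ‖u - v‖ ≤ ‖u - w‖ := by
    simpa [norm_sub_rev u w] using norm_sub_norm_le (w - v) (u - v)
  have hsum : ‖w - v‖ + ‖u - v‖ ≤ 4 * M := by
    linarith [norm_sub_le w v, norm_sub_le u v]
  nlinarith [norm_nonneg (w - v), norm_nonneg (u - v), norm_nonneg (u - w)]

theorem norm_sub_le_of_iSup_le {f g : E → E} (hf : ∀ x, ‖f x‖ ≤ M) (hg : ∀ x, ‖g x‖ ≤ M)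
    {r : ℝ} (h : ⨆ x, ‖f x - g x‖ ≤ r) (x : E) : ‖f x - g x‖ ≤ r := by
  refine (le_ciSup ⟨M + M, ?_⟩ x).trans h
  rintro _ ⟨y, rfl⟩
  exact (norm_sub_le _ _).trans (add_le_add (hf y) (hg y))

theorem empLoss_nonneg {n : ℕ} (S : Fin n → E × E) (f : E → E) : 0 ≤ empLoss S f := by
  unfold empLoss
  positivity

theorem empLoss_le_add {n : ℕ} {S : Fin n → E × E} {f g : E → E} {c : ℝ} (hc : 0 ≤ c)
    (h : ∀ i, ‖g (S i).1 - (S i).2‖ ^ 2 ≤ ‖f (S i).1 - (S i).2‖ ^ 2 + c) :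
    empLoss S g ≤ empLoss S f + c := by
  have hnc : 1 / (n : ℝ) * (n * c) ≤ c := by
    rcases Nat.eq_zero_or_pos n with rfl | hn
    · simpa using hc
    · rw [one_div_mul_eq_div, mul_div_cancel_left₀ c (Nat.cast_ne_zero.2 hn.ne')]
  calc empLoss S g ≤ 1 / (n : ℝ) * ∑ i, (‖f (S i).1 - (S i).2‖ ^ 2 + c) := by
        unfold empLoss
        gcongr with i
        exact h i
    _ = empLoss S f + 1 / (n : ℝ) * (n * c) := by
        simp [empLoss, Finset.sum_add_distrib, mul_add]
    _ ≤ empLoss S f + c := by linarith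

variable [MeasurableSpace E] {μ : Measure (E × E)}

theorem popLoss_le [IsProbabilityMeasure μ] (hμ : ∀ᵐ p ∂μ, ‖p.2‖ ≤ M) {f : E → E}
    (hf : ∀ x, ‖f x‖ ≤ M) :
    popLoss μ f ≤ (2 * M) ^ 2 := by
  calc popLoss μ f ≤ ∫ _ : E × E, (2 * M) ^ 2 ∂μ := by
        refine integral_mono_of_nonneg (ae_of_all _ fun _ => by positivity) (integrable_const _) ?_
        filter_upwards [hμ] with p hp using sq_norm_sub_le_of_norm_le (hf p.1) hp
    _ = (2 * M) ^ 2 := by simp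

def badSamples (μ : Measure (E × E)) (A : Set (E → E)) (c : ℝ) (n : ℕ) : Set (Fin n → E × E) :=
  {S | ∃ f ∈ A, empLoss S f + c < popLoss μ f}

theorem measure_badSamples_le [IsProbabilityMeasure μ] (hμ : ∀ᵐ p ∂μ, ‖p.2‖ ≤ M) {A : Set (E → E)}
    (hint : ∀ f ∈ A, Integrable (fun p : E × E => ‖f p.1 - p.2‖ ^ 2) μ)
    (hbd : ∀ f ∈ A, ∀ x, ‖f x‖ ≤ M) {ρ : ℝ} (hclose : ∀ f ∈ A, ∀ g ∈ A, ∀ x, ‖f x - g x‖ ≤ ρ)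
    {s c : ℝ} (hs : 0 ≤ s) (hc : s + 4 * M * ρ < c) (n : ℕ) :
    Measure.pi (fun _ : Fin n => μ) (badSamples μ A c n)
      ≤ ENNReal.ofReal (Real.exp (-2 * n * s ^ 2 / ((2 * M) ^ 2) ^ 2)) := by
  rcases A.eq_empty_or_nonempty with rfl | hA
  · simp [badSamples]
  obtain ⟨g, hgA, hg⟩ := exists_mem_forall_le_add hA
    ⟨(2 * M) ^ 2, by rintro _ ⟨f, hf, rfl⟩; exact popLoss_le hμ (hbd f hf)⟩ (sub_pos.2 hc)
  have hgloss : ∀ᵐ p ∂μ, ‖g p.1 - p.2‖ ^ 2 ∈ Set.Icc 0 ((2 * M) ^ 2) := by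
    filter_upwards [hμ] with p hp
    exact ⟨by positivity, sq_norm_sub_le_of_norm_le (hbd g hgA p.1) hp⟩
  refine le_trans (measure_mono_ae ?_)
    ((measure_pi_le_integral_sub_sampleMean_le (hint g hgA).aemeasurable hgloss n hs).trans_eq
      (by rw [sub_zero]))
  have hsample : ∀ᵐ S ∂Measure.pi (fun _ : Fin n => μ), ∀ i, ‖(S i).2‖ ≤ M :=
    Filter.eventually_all.2 fun i =>
      (Measure.tendsto_eval_ae_ae (μ := fun _ : Fin n => μ) (i := i)).eventually
        (p := fun p : E × E => ‖p.2‖ ≤ M) hμ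
  have hM : 0 ≤ M := (norm_nonneg _).trans (hbd g hgA 0)
  have hρ : 0 ≤ ρ := by simpa using hclose g hgA g hgA 0
  filter_upwards [hsample] with S hS ⟨f, hfA, hf⟩
  have hemp : empLoss S g ≤ empLoss S f + 4 * M * ρ := by
    refine empLoss_le_add (by positivity) fun i => ?_
    have := sq_norm_sub_le_sq_norm_sub_add (hbd f hfA (S i).1) (hS i) (hbd g hgA (S i).1)
    have := mul_le_mul_of_nonneg_left (hclose f hfA g hgA (S i).1) (by positivity : 0 ≤ 4 * M)
    linarith
  change s ≤ popLoss μ g - empLoss S g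
  linarith [hg f hfA]

def netCell (μ : Measure (E × E)) (F : Set (E → E)) (r : ℝ) (t : E → E) : Set (E → E) :=
  {f ∈ F | (∀ x, ‖f x - t x‖ ≤ r) ∧ Integrable (fun p : E × E => ‖f p.1 - p.2‖ ^ 2) μ}

theorem norm_sub_le_of_mem_netCell {F : Set (E → E)} {r : ℝ} {t f g : E → E}
    (hf : f ∈ netCell μ F r t) (hg : g ∈ netCell μ F r t) (x : E) : ‖f x - g x‖ ≤ 2 * r :=
  calc ‖f x - g x‖ ≤ ‖f x - t x‖ + ‖t x - g x‖ := norm_sub_le_norm_sub_add_norm_sub ..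
    _ ≤ 2 * r := by linarith [hf.2.1 x, hg.2.1 x, norm_sub_rev (t x) (g x)]

theorem setOf_not_forall_popLoss_le_subset {F : Set (E → E)} (hFbd : ∀ f ∈ F, ∀ x, ‖f x‖ ≤ M)
    {T : Finset (E → E)} (hTF : ↑T ⊆ F) {r : ℝ}
    (hnet : ∀ f ∈ F, ∃ t ∈ T, (⨆ x : E, ‖f x - t x‖) ≤ r) {c : ℝ} (hc : 0 ≤ c) (n : ℕ) :
    {S : Fin n → E × E | ¬ ∀ f ∈ F, popLoss μ f ≤ empLoss S f + c}
      ⊆ ⋃ t ∈ T, badSamples μ (netCell μ F r t) c n := by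
  intro S hS
  push Not at hS
  obtain ⟨f, hf, hbad⟩ := hS
  obtain ⟨t, ht, hft⟩ := hnet f hf
  -- a nonzero Bochner integral is only possible for an integrable integrand
  have hint : Integrable (fun p : E × E => ‖f p.1 - p.2‖ ^ 2) μ :=
    Integrable.of_integral_ne_zero (by unfold popLoss at hbad; linarith [empLoss_nonneg S f])
  exact Set.mem_biUnion ht
    ⟨f, ⟨hf, norm_sub_le_of_iSup_le (hFbd f hf) (hFbd t (hTF ht)) hft, hint⟩, hbad⟩

end TranslationLoss

theorem generalization_single_task_general {E : Type*} [NormedAddCommGroup E]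
    [MeasurableSpace E]
    (μ : Measure (E × E)) [IsProbabilityMeasure μ] (M : ℝ) (hM : 0 < M)
    (hμ : ∀ᵐ p ∂μ, ‖p.2‖ ≤ M)
    (F : Set (E → E))
    (hFbd : ∀ f ∈ F, ∀ x, ‖f x‖ ≤ M)
    (ε : ℝ) (hε : 0 < ε) (δ : ℝ) (hδ₀ : 0 < δ)
    (T : Finset (E → E)) (hTF : ↑T ⊆ F) (k : ℕ) (hk : T.card = k)
    (hnet : ∀ f ∈ F, ∃ t ∈ T, (⨆ x : E, ‖f x - t x‖) ≤ ε / (16 * M))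
    (n : ℕ) (hn : (32 * M ^ 4 / ε ^ 2) * Real.log (2 * (k : ℝ) / δ) ≤ (n : ℝ)) :
    (Measure.pi fun _ : Fin n => μ)
        {S : Fin n → E × E | ¬ ∀ f ∈ F, popLoss μ f ≤ empLoss S f + ε}
      ≤ ENNReal.ofReal δ := by
  rcases F.eq_empty_or_nonempty with rfl | ⟨f₀, hf₀⟩
  · simp
  have hk0 : 0 < k := by
    obtain ⟨t, ht, -⟩ := hnet f₀ hf₀
    exact hk ▸ Finset.card_pos.2 ⟨t, ht⟩
  obtain ⟨s, ⟨hs0, hsε⟩, hexp⟩ :=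
    exists_mem_Ioo_exp_lt (half_pos hε) (exp_neg_lt_div_of_log_le hM hε hδ₀ hk0 hn)
  have hcell (t : E → E) :
      (Measure.pi fun _ : Fin n => μ) (badSamples μ (netCell μ F (ε / (16 * M)) t) ε n)
        ≤ ENNReal.ofReal (δ / k) := by
    have hc : s + 4 * M * (2 * (ε / (16 * M))) < ε := by
      have : 4 * M * (2 * (ε / (16 * M))) = ε / 2 := by field_simp; ring
      linarith
    exact (measure_badSamples_le hμ (fun f hf => hf.2.2) (fun f hf => hFbd f hf.1)
      (fun f hf g hg => norm_sub_le_of_mem_netCell hf hg) hs0.le hc n).trans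
      (ENNReal.ofReal_le_ofReal hexp.le)
  calc _ ≤ (Measure.pi fun _ : Fin n => μ) (⋃ t ∈ T, badSamples μ (netCell μ F _ t) ε n) :=
        measure_mono (setOf_not_forall_popLoss_le_subset hFbd hTF hnet hε.le n)
    _ ≤ ∑ t ∈ T, (Measure.pi fun _ : Fin n => μ) (badSamples μ (netCell μ F _ t) ε n) :=
        measure_biUnion_finset_le _ _
    _ ≤ ∑ _t ∈ T, ENNReal.ofReal (δ / k) := Finset.sum_le_sum fun t _ => hcell t
    _ = ENNReal.ofReal δ := by
        rw [Finset.sum_const, hk, nsmul_eq_mul, ← ENNReal.ofReal_natCast,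
          ← ENNReal.ofReal_mul (by positivity)]
        field_simp

/-- Generalization bound for a single translation task: if `T ⊆ F` is a finite
`(ε/(16M))`-net of `F` in sup norm of cardinality `k` and
`n ≥ (32·M⁴/ε²)·log(2k/δ)`, then with `μⁿ`-(outer) probability at least `1 - δ`
(i.e., the bad event has measure at most `δ`), every `f ∈ F` satisfies
`ε(f) ≤ ε̂_S(f) + ε`. -/
theorem generalization_single_task {E : Type*} [NormedAddCommGroup E] [NormedSpace ℝ E]
    [MeasurableSpace E] [BorelSpace E]
    (μ : Measure (E × E)) [IsProbabilityMeasure μ] (M : ℝ) (hM : 0 < M)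
    (hμ : ∀ᵐ p ∂μ, ‖p.2‖ ≤ M)
    (F : Set (E → E)) (hFmeas : ∀ f ∈ F, Measurable f)
    (hFbd : ∀ f ∈ F, ∀ x, ‖f x‖ ≤ M)
    (ε : ℝ) (hε : 0 < ε) (δ : ℝ) (hδ₀ : 0 < δ) (hδ₁ : δ < 1)
    (T : Finset (E → E)) (hTF : ↑T ⊆ F) (k : ℕ) (hk : T.card = k)
    (hnet : ∀ f ∈ F, ∃ t ∈ T, (⨆ x : E, ‖f x - t x‖) ≤ ε / (16 * M))
    (n : ℕ) (hn : (32 * M ^ 4 / ε ^ 2) * Real.log (2 * (k : ℝ) / δ) ≤ (n : ℝ)) :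
    (Measure.pi fun _ : Fin n => μ)
        {S : Fin n → E × E | ¬ ∀ f ∈ F, popLoss μ f ≤ empLoss S f + ε}
      ≤ ENNReal.ofReal δ :=
  generalization_single_task_general μ M hM hμ F hFbd ε hε δ hδ₀ T hTF k hk hnet n hn
end
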